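/- arXiv:1601.03426 — 2 statements merged into one kernel-verified Lean document; each statement's English description precedes it below -/
import Mathlib

section
/- Let q be a polynomial with integer coefficients of degree d ≥ 1 and positive leading coefficient. Then there exist a real constant c > 0 and a threshold N₀ such that for every natural number N ≥ N₀, the number of integers k with 1 ≤ k ≤ N that lie in the image of ℕ under q (i.e. k = q(n) for some n ∈ ℕ) is at least c · N^(1/d). -/
open scoped Classical
open Polynomial Finset Filter

/-- Let `q` be a polynomial with integer coefficients of degree `d ≥ 1` and positive leading
coefficient. Then there exist a real constant `c > 0` and a threshold `N₀` such that for every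
natural number `N ≥ N₀`, the number of integers `k` with `1 ≤ k ≤ N` lying in the image of `ℕ`
under `q` is at least `c * N ^ (1 / d)`. -/
theorem lower_bound_on_polynomial_image_count (q : Polynomial ℤ) (hd : 1 ≤ q.natDegree)
    (hl : 0 < q.leadingCoeff) :
    ∃ c : ℝ, 0 < c ∧ ∃ N₀ : ℕ, ∀ N : ℕ, N₀ ≤ N →
      c * (N : ℝ) ^ ((1 : ℝ) / (q.natDegree : ℝ)) ≤
        (((Finset.Icc 1 N).filter (fun k => ∃ n : ℕ, q.eval (n : ℤ) = (k : ℤ))).card : ℝ) := by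
  set d := q.natDegree with hdd
  have hdR : (0:ℝ) < d := by exact_mod_cast Nat.lt_of_lt_of_le Nat.zero_lt_one hd
  have hdne : (d:ℝ) ≠ 0 := ne_of_gt hdR
  -- Step A : eventual positivity of values
  have hA : ∃ n₁ : ℕ, 1 ≤ n₁ ∧ ∀ n : ℕ, n₁ ≤ n → 1 ≤ q.eval (n : ℤ) := by
    set Q : Polynomial ℝ := q.map (Int.castRingHom ℝ) with hQ
    have hinj : Function.Injective (Int.castRingHom ℝ) := Int.cast_injective
    have hdeg : 0 < Q.degree := by
      rw [hQ, Polynomial.degree_map_eq_of_injective hinj]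
      exact Polynomial.natDegree_pos_iff_degree_pos.mp (Nat.lt_of_lt_of_le Nat.zero_lt_one hd)
    have hlc : 0 ≤ Q.leadingCoeff := by
      rw [hQ, Polynomial.leadingCoeff, Polynomial.natDegree_map_eq_of_injective hinj,
        Polynomial.coeff_map]
      rw [eq_intCast]
      exact_mod_cast hl.le
    have ht := Polynomial.tendsto_atTop_of_leadingCoeff_nonneg Q hdeg hlc
    have ht2 : Tendsto (fun n : ℕ => Q.eval (n:ℝ)) atTop atTop :=
      ht.comp tendsto_natCast_atTop_atTop
    obtain ⟨n₁, hn₁⟩ := Filter.eventually_atTop.mp (ht2.eventually_ge_atTop 1)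
    refine ⟨max n₁ 1, le_max_right _ _, fun n hn => ?_⟩
    have h1 := hn₁ n (le_trans (le_max_left _ _) hn)
    have key : Q.eval (n:ℝ) = ((q.eval (n:ℤ) : ℤ) : ℝ) := by
      rw [hQ, show ((n:ℕ):ℝ) = (Int.castRingHom ℝ) ((n:ℕ):ℤ) by simp,
        Polynomial.eval_map, Polynomial.eval₂_at_apply, eq_intCast]
    rw [key] at h1
    exact_mod_cast h1
  obtain ⟨n₁, hn₁1, hn₁⟩ := hA
  -- Step B : upper bound on values
  set C : ℕ := ∑ i ∈ Finset.range (d+1), (q.coeff i).natAbs with hCdef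
  have hC1 : 1 ≤ C := by
    have h1 : 1 ≤ (q.coeff d).natAbs := by
      have : q.coeff d ≠ 0 := by
        have : (0:ℤ) < q.coeff d := hl
        omega
      omega
    calc 1 ≤ (q.coeff d).natAbs := h1
      _ ≤ C := Finset.single_le_sum (f := fun i => (q.coeff i).natAbs)
          (fun i _ => Nat.zero_le _) (Finset.self_mem_range_succ d)
  have hCR : (0:ℝ) < C := by exact_mod_cast Nat.lt_of_lt_of_le Nat.zero_lt_one hC1
  have hB : ∀ n : ℕ, 1 ≤ n → q.eval (n:ℤ) ≤ (C:ℤ) * (n:ℤ)^d := by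
    intro n hn
    have h1 : (1:ℤ) ≤ (n:ℤ) := by exact_mod_cast hn
    rw [Polynomial.eval_eq_sum_range]
    have hrw : ((C:ℤ)) * (n:ℤ)^d = ∑ i ∈ Finset.range (d+1), ((q.coeff i).natAbs : ℤ) * (n:ℤ)^d := by
      rw [hCdef]; push_cast; rw [Finset.sum_mul]
    rw [hrw]
    apply Finset.sum_le_sum
    intro i hi
    have hi' : i ≤ d := Nat.lt_succ_iff.mp (Finset.mem_range.mp hi)
    calc q.coeff i * (n:ℤ)^i ≤ |q.coeff i| * (n:ℤ)^i :=
          mul_le_mul_of_nonneg_right (le_abs_self _) (by positivity)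
      _ ≤ |q.coeff i| * (n:ℤ)^d :=
          mul_le_mul_of_nonneg_left (pow_le_pow_right₀ h1 hi') (abs_nonneg _)
      _ = ((q.coeff i).natAbs : ℤ) * (n:ℤ)^d := by rw [Int.abs_eq_natAbs]
  -- Step C : fiber bound
  have hfib : ∀ (b : ℤ) (s : Finset ℕ),
      (s.filter (fun a : ℕ => q.eval (a:ℤ) = b)).card ≤ d := by
    intro b s
    have hq0 : q - Polynomial.C b ≠ 0 := by
      intro h
      have h2 : (q - Polynomial.C b).natDegree = d := Polynomial.natDegree_sub_C
      rw [h] at h2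
      simp at h2
      omega
    have hsub : ∀ a ∈ s.filter (fun a : ℕ => q.eval (a:ℤ) = b),
        ((a:ℤ)) ∈ (q - Polynomial.C b).roots.toFinset := by
      intro a ha
      rw [Finset.mem_filter] at ha
      rw [Multiset.mem_toFinset, Polynomial.mem_roots hq0]
      simp [Polynomial.IsRoot, ha.2]
    calc (s.filter (fun a : ℕ => q.eval (a:ℤ) = b)).card
        ≤ (q - Polynomial.C b).roots.toFinset.card :=
          Finset.card_le_card_of_injOn (fun a => (a:ℤ)) hsub
            (fun x _ y _ h => Nat.cast_injective h)
      _ ≤ Multiset.card (q - Polynomial.C b).roots := Multiset.toFinset_card_le _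
      _ ≤ (q - Polynomial.C b).natDegree := Polynomial.card_roots' _
      _ = d := Polynomial.natDegree_sub_C
  -- the constant and threshold
  refine ⟨1 / (2 * d * C : ℝ), by positivity, (2*C*n₁)^d, fun N hN => ?_⟩
  set R : ℝ := ((N:ℝ)/C) ^ ((1:ℝ)/d) with hRdef
  set M : ℕ := ⌊R⌋₊ with hMdef
  have hNC : (0:ℝ) ≤ (N:ℝ)/C := by positivity
  have hR0 : (0:ℝ) ≤ R := Real.rpow_nonneg hNC _
  have hRd : R ^ (d:ℕ) = (N:ℝ)/C := by
    rw [hRdef, ← Real.rpow_natCast (((N:ℝ)/C) ^ ((1:ℝ)/d)) d, ← Real.rpow_mul hNC,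
      one_div_mul_cancel hdne, Real.rpow_one]
  -- N is large
  have hNlarge : ((2*C*n₁ : ℕ)^d : ℝ) ≤ (N:ℝ) := by exact_mod_cast hN
  have h2n₁R : ((2*n₁ : ℕ) : ℝ) ≤ R := by
    have hx : ((2*n₁ : ℕ) : ℝ) ^ (d:ℕ) ≤ (N:ℝ)/C := by
      rw [le_div_iff₀ hCR]
      calc ((2*n₁:ℕ):ℝ)^(d:ℕ) * C ≤ ((2*n₁:ℕ):ℝ)^(d:ℕ) * (C:ℝ)^(d:ℕ) := by
            apply mul_le_mul_of_nonneg_left _ (by positivity)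
            exact le_self_pow₀ (by exact_mod_cast hC1) (by omega)
        _ = ((2*C*n₁ : ℕ):ℝ)^(d:ℕ) := by push_cast; ring
        _ ≤ (N:ℝ) := hNlarge
    have := Real.rpow_le_rpow (by positivity) hx (by positivity : (0:ℝ) ≤ (1:ℝ)/d)
    rwa [← Real.rpow_natCast ((2*n₁:ℕ):ℝ) d, ← Real.rpow_mul (by positivity),
      mul_one_div_cancel hdne, Real.rpow_one] at this
  have hM2 : 2*n₁ ≤ M := Nat.le_floor h2n₁R
  have hMn : n₁ ≤ M := by omega
  -- all values in [n₁, M] give valid elements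
  have hCMN : (C:ℤ) * (M:ℤ)^d ≤ (N:ℤ) := by
    have hMR : (M:ℝ) ≤ R := Nat.floor_le hR0
    have : (C:ℝ) * (M:ℝ)^(d:ℕ) ≤ (N:ℝ) := by
      calc (C:ℝ) * (M:ℝ)^(d:ℕ) ≤ (C:ℝ) * R^(d:ℕ) := by
            apply mul_le_mul_of_nonneg_left (pow_le_pow_left₀ (by positivity) hMR d) hCR.le
        _ = (C:ℝ) * ((N:ℝ)/C) := by rw [hRd]
        _ = (N:ℝ) := by field_simp
    exact_mod_cast this
  set t := (Finset.Icc 1 N).filter (fun k => ∃ n : ℕ, q.eval (n : ℤ) = (k : ℤ)) with htdef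
  set s := Finset.Icc n₁ M with hsdef
  have hval : ∀ a ∈ s, 1 ≤ q.eval (a:ℤ) ∧ q.eval (a:ℤ) ≤ (N:ℤ) := by
    intro a ha
    rw [hsdef, Finset.mem_Icc] at ha
    refine ⟨hn₁ a ha.1, ?_⟩
    calc q.eval (a:ℤ) ≤ (C:ℤ) * (a:ℤ)^d := hB a (le_trans hn₁1 ha.1)
      _ ≤ (C:ℤ) * (M:ℤ)^d := by
          apply mul_le_mul_of_nonneg_left _ (by positivity)
          exact pow_le_pow_left₀ (by positivity) (by exact_mod_cast ha.2) d
      _ ≤ (N:ℤ) := hCMN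
  have hmaps : ∀ a ∈ s, q.eval (a:ℤ) ∈ t := by
    intro a ha
    obtain ⟨h1, h2⟩ := hval a ha
    have hmem : q.eval (a:ℤ) ∈ t ↔
        (∃ b ∈ Finset.Icc 1 N, (b:ℤ) = q.eval (a:ℤ)) ∧ (∃ n : ℕ, q.eval (n:ℤ) = q.eval (a:ℤ)) := by
      rw [htdef]; simp
    rw [hmem]
    exact ⟨⟨(q.eval (a:ℤ)).toNat, Finset.mem_Icc.mpr ⟨by omega, by omega⟩, by omega⟩, ⟨a, rfl⟩⟩
  have hcard : s.card ≤ d * t.card := by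
    apply Finset.card_le_mul_card_image_of_maps_to hmaps d
    intro b _
    exact hfib b s
  -- final computation
  have hscard : (s.card : ℝ) = (M:ℝ) + 1 - n₁ := by
    rw [hsdef, Nat.card_Icc]
    have : M + 1 - n₁ + n₁ = M + 1 := by omega
    push_cast [Nat.cast_sub (by omega : n₁ ≤ M + 1)]
    ring
  have hRM : R ≤ (M:ℝ) + 1 := (Nat.lt_floor_add_one R).le
  have hn₁R : (n₁:ℝ) ≤ R/2 := by
    have : ((2*n₁:ℕ):ℝ) = 2*(n₁:ℝ) := by push_cast; ring
    rw [this] at h2n₁R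
    linarith
  have hs2 : R/2 ≤ (s.card : ℝ) := by rw [hscard]; linarith
  have h3 : (s.card : ℝ) ≤ (d:ℝ) * t.card := by exact_mod_cast hcard
  have h4 : (N:ℝ) ^ ((1:ℝ)/d) ≤ (C:ℝ) * R := by
    have hNCC : (N:ℝ) = (C:ℝ) * ((N:ℝ)/C) := by field_simp
    calc (N:ℝ) ^ ((1:ℝ)/d) = ((C:ℝ) * ((N:ℝ)/C)) ^ ((1:ℝ)/d) := by rw [← hNCC]
      _ = (C:ℝ)^((1:ℝ)/d) * R := by rw [Real.mul_rpow hCR.le hNC]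
      _ ≤ (C:ℝ)^(1:ℝ) * R := by
          apply mul_le_mul_of_nonneg_right _ hR0
          apply Real.rpow_le_rpow_of_exponent_le (by exact_mod_cast hC1)
          rw [div_le_one hdR]
          exact_mod_cast hd
      _ = (C:ℝ) * R := by rw [Real.rpow_one]
  have hkey : (N:ℝ) ^ ((1:ℝ)/d) ≤ 2 * d * C * t.card := by
    have hCs : (C:ℝ) * R ≤ (C:ℝ) * (2 * ((d:ℝ) * t.card)) := by
      apply mul_le_mul_of_nonneg_left _ hCR.le
      linarith
    nlinarith
  rw [one_div_mul_eq_div, div_le_iff₀ (by positivity)]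
  nlinarith [Nat.cast_nonneg (α := ℝ) t.card]
end

section
/- Let U be a nonprincipal ultrafilter on ℕ and let M : ℕ → Type be a family of types each of which is countably infinite. Then the ultraproduct Π_U Mₙ has cardinality 2^ℵ₀ (the cardinality of the continuum). -/
/-!
The ultraproduct is a quotient of `Π n, M n`, which has at most `ℵ₀ ^ ℵ₀ = 𝔠` elements.
Conversely, send `x : ℕ → Bool` to the sequence whose `n`-th term is (an injective image in
`M n` of) a code of `x 0, …, x (n - 1)`. The codes of distinct `x` and `y` differ from some index
on, and a nonprincipal ultrafilter contains every cofinite set, so this map is injective on the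
ultraproduct.
-/

open Cardinal Filter

theorem Cardinal.mk_pi_le_continuum {ι : Type*} [Countable ι] (M : ι → Type*)
    [∀ i, Countable (M i)] : #(∀ i, M i) ≤ 𝔠 := by
  calc #(∀ i, M i) = prod fun i => #(M i) := mk_pi M
    _ ≤ prod fun _ : ι => ℵ₀ := prod_le_prod _ _ fun i => mk_le_aleph0
    _ ≤ 𝔠 := by
      rw [prod_const, lift_aleph0, ← aleph0_power_aleph0]
      exact power_le_power_left aleph0_ne_zero (lift_le_aleph0.mpr mk_le_aleph0)

def prefixCode (x : ℕ → Bool) (n : ℕ) : ℕ :=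
  Encodable.encode (List.ofFn fun i : Fin n => x i)

theorem eventually_prefixCode_ne {x y : ℕ → Bool} (hxy : x ≠ y) :
    ∀ᶠ n in cofinite, prefixCode x n ≠ prefixCode y n := by
  obtain ⟨k, hk⟩ := Function.ne_iff.mp hxy
  rw [Nat.cofinite_eq_atTop, eventually_atTop]
  refine ⟨k + 1, fun n hn hcode => hk ?_⟩
  have hprefix := congrArg (·[k]?) (Encodable.encode_injective hcode)
  simpa [List.getElem?_ofFn, Nat.lt_of_succ_le hn] using hprefix

theorem Filter.continuum_le_mk_product {l : Filter ℕ} [l.NeBot] (hl : l ≤ cofinite)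
    (M : ℕ → Type*) [∀ n, Infinite (M n)] : 𝔠 ≤ #(l.Product M) := by
  let f (x : ℕ → Bool) : l.Product M :=
    Quotient.mk (productSetoid l M) fun n => Infinite.natEmbedding (M n) (prefixCode x n)
  have hf : Function.Injective f := by
    intro x y hxy
    by_contra hne
    have heq : ∀ᶠ n in l, _ := Quotient.eq.mp hxy
    obtain ⟨n, hcode, hcode_ne⟩ := (heq.and (hl (eventually_prefixCode_ne hne))).exists
    exact hcode_ne ((Infinite.natEmbedding (M n)).injective hcode)
  calc 𝔠 = lift #(ℕ → Bool) := by simp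
    _ ≤ #(l.Product M) := by simpa using lift_mk_le_lift_mk_of_injective hf

/-- Let `U` be a nonprincipal ultrafilter on `ℕ` and let `M : ℕ → Type` be a family of types,
each countably infinite. Then the ultraproduct `Π_U Mₙ` has cardinality `2^ℵ₀`, the cardinality
of the continuum. -/
theorem mk_ultraproduct_of_countably_infinite (U : Ultrafilter ℕ) (hU : ∀ n : ℕ, U ≠ pure n)
    (M : ℕ → Type) (hcount : ∀ n, Countable (M n)) (hinf : ∀ n, Infinite (M n)) :
    Cardinal.mk ((U : Filter ℕ).Product M) = Cardinal.continuum := by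
  have hU_le : (U : Filter ℕ) ≤ cofinite :=
    U.le_cofinite_or_eq_pure.resolve_right fun ⟨n, hn⟩ => hU n hn
  refine le_antisymm ?_ (continuum_le_mk_product hU_le M)
  exact mk_quotient_le.trans (mk_pi_le_continuum M)
end
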